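/- Let n ≥ 2, let Θ̂ be a real number with (n−2)·π/2 < Θ̂ < n·π/2, and let μ = (μ₁, …, μₙ) ∈ ℝⁿ satisfy, for every index j ∈ {1, …, n}, Σ_{i ≠ j} arctan(μᵢ) > Θ̂ − π/2. Fix p with 1 ≤ p ≤ n−1, and for each subset S ⊆ {1, …, n} with |S| = p let c_S ≥ 0 be a nonnegative real coefficient, not all of which are zero. Then the complex number Σ_{|S| = p} c_S · ∏_{i ∈ S} (1 + i·μᵢ) is nonzero and can be written as R·exp(i·φ) with R > 0 and Θ̂ − (n−p)·π/2 < φ < p·π/2. -/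

import Mathlib

open Real

/-!
Since `1 + iμᵢ = √(1 + μᵢ²) e^{i arctan μᵢ}`, the sum is a nonnegative, nonzero combination of
the unit vectors `e^{iθ_S}` with `θ_S = Σ_{i ∈ S} arctan μᵢ`. Trivially `θ_S < pπ/2`; and
`θ_S > Θ̂ - (n - p)π/2` because `S` misses some `j`, and each of the `n - 1 - p` angles of
`{i ≠ j} \ S` is below `π/2`. This window has length `nπ/2 - Θ̂ < π`, and a nonnegative, nonzero
combination of vectors with arguments in an open arc shorter than `π` is a nonzero vector with
argument in the same arc: once the arc is rotated to `(-δ, δ)`, membership is the cone condition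
`|Im z| < tan δ · Re z`, which is linear in `z`.
-/

lemma abs_sin_lt_tan_mul_cos {x δ : ℝ} (hδ : δ < π / 2) (hx : |x| < δ) :
    |sin x| < tan δ * cos x := by
  obtain ⟨hxl, hxr⟩ := abs_lt.1 hx
  have hcos : 0 < cos x := cos_pos_of_mem_Ioo ⟨by linarith, by linarith⟩
  calc |sin x| = |tan x| * cos x := by
        rw [tan_eq_sin_div_cos, abs_div, abs_of_pos hcos, div_mul_cancel₀ _ hcos.ne']
    _ < tan δ * cos x := by
        gcongr
        refine abs_lt.2 ⟨?_, tan_lt_tan_of_lt_of_lt_pi_div_two (by linarith) hδ hxr⟩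
        rw [← tan_neg]
        exact tan_lt_tan_of_lt_of_lt_pi_div_two (by linarith) (by linarith) hxl

lemma abs_arg_lt_of_abs_im_lt_tan_mul_re {z : ℂ} {δ : ℝ} (hδ₀ : 0 < δ) (hδ : δ < π / 2)
    (h : |z.im| < tan δ * z.re) : |Complex.arg z| < δ := by
  have hre : 0 < z.re := pos_of_mul_pos_right ((abs_nonneg _).trans_lt h)
    (tan_pos_of_pos_of_lt_pi_div_two hδ₀ hδ).le
  have harg : Complex.arg z = arctan (z.im / z.re) := by
    obtain ⟨hl, hr⟩ := abs_lt.1 (Complex.abs_arg_lt_pi_div_two_iff.2 (Or.inl hre))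
    rw [← Complex.tan_arg, arctan_tan hl hr]
  have hratio : |z.im / z.re| < tan δ := by
    rwa [abs_div, abs_of_pos hre, div_lt_iff₀ hre]
  obtain ⟨hl, hr⟩ := abs_lt.1 hratio
  rw [harg, abs_lt, ← arctan_tan (x := δ) (by linarith) hδ, ← arctan_neg]
  exact ⟨arctan_strictMono hl, arctan_strictMono hr⟩

lemma abs_im_lt_tan_mul_re_of_sum {ι : Type*} {T : Finset ι} {w ψ : ι → ℝ} {δ : ℝ}
    (hδ : δ < π / 2) (hw : ∀ t ∈ T, 0 ≤ w t) (hψ : ∀ t ∈ T, |ψ t| < δ)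
    (hpos : ∃ t ∈ T, 0 < w t) :
    |(∑ t ∈ T, (w t : ℂ) * Complex.exp (ψ t * Complex.I)).im| <
      tan δ * (∑ t ∈ T, (w t : ℂ) * Complex.exp (ψ t * Complex.I)).re := by
  simp only [Complex.re_sum, Complex.im_sum, Complex.re_ofReal_mul, Complex.im_ofReal_mul,
    Complex.exp_ofReal_mul_I_re, Complex.exp_ofReal_mul_I_im]
  obtain ⟨t₀, ht₀, hwt₀⟩ := hpos
  calc |∑ t ∈ T, w t * sin (ψ t)| ≤ ∑ t ∈ T, w t * |sin (ψ t)| := by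
        refine (Finset.abs_sum_le_sum_abs _ _).trans_eq (Finset.sum_congr rfl fun t ht => ?_)
        rw [abs_mul, abs_of_nonneg (hw t ht)]
    _ < ∑ t ∈ T, w t * (tan δ * cos (ψ t)) :=
        Finset.sum_lt_sum (fun t ht => mul_le_mul_of_nonneg_left
          (abs_sin_lt_tan_mul_cos hδ (hψ t ht)).le (hw t ht))
          ⟨t₀, ht₀, mul_lt_mul_of_pos_left (abs_sin_lt_tan_mul_cos hδ (hψ t₀ ht₀)) hwt₀⟩
    _ = tan δ * ∑ t ∈ T, w t * cos (ψ t) := by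
        rw [Finset.mul_sum]
        exact Finset.sum_congr rfl fun t _ => by ring

lemma exists_sum_mul_exp_eq_mul_exp {ι : Type*} {T : Finset ι} {w θ : ι → ℝ} {a b : ℝ}
    (hab : b - a < π) (hw : ∀ t ∈ T, 0 ≤ w t) (hθ : ∀ t ∈ T, θ t ∈ Set.Ioo a b)
    (hpos : ∃ t ∈ T, 0 < w t) :
    ∃ R φ : ℝ, 0 < R ∧ φ ∈ Set.Ioo a b ∧
      ∑ t ∈ T, (w t : ℂ) * Complex.exp (θ t * Complex.I) = R * Complex.exp (φ * Complex.I) := by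
  have hab' : a < b := by
    obtain ⟨t₀, ht₀, -⟩ := hpos
    exact (hθ t₀ ht₀).1.trans (hθ t₀ ht₀).2
  set m := (a + b) / 2 with hm
  set δ := (b - a) / 2 with hδ
  have hψ : ∀ t ∈ T, |θ t - m| < δ := fun t ht => by
    obtain ⟨hl, hr⟩ := hθ t ht
    exact abs_lt.2 ⟨by linarith, by linarith⟩
  set z := ∑ t ∈ T, (w t : ℂ) * Complex.exp ((θ t - m : ℝ) * Complex.I)
  have hcone : |z.im| < tan δ * z.re := abs_im_lt_tan_mul_re_of_sum (by linarith) hw hψ hpos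
  have hz : z ≠ 0 := by
    rintro h
    simp [h] at hcone
  obtain ⟨hl, hr⟩ := abs_lt.1 (abs_arg_lt_of_abs_im_lt_tan_mul_re (by linarith) (by linarith) hcone)
  have hrot : ∑ t ∈ T, (w t : ℂ) * Complex.exp (θ t * Complex.I) =
      z * Complex.exp (m * Complex.I) := by
    rw [Finset.sum_mul]
    refine Finset.sum_congr rfl fun t _ => ?_
    rw [mul_assoc, ← Complex.exp_add]
    push_cast
    ring_nf
  refine ⟨‖z‖, m + Complex.arg z, norm_pos_iff.2 hz, ⟨by linarith, by linarith⟩, ?_⟩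
  rw [hrot]
  nth_rw 1 [← Complex.norm_mul_exp_arg_mul_I z]
  rw [mul_assoc, ← Complex.exp_add]
  push_cast
  ring_nf

lemma one_add_I_mul_eq (x : ℝ) :
    1 + Complex.I * x = √(1 + x ^ 2) * Complex.exp (arctan x * Complex.I) := by
  have h : (√(1 + x ^ 2) : ℂ) ≠ 0 := Complex.ofReal_ne_zero.2 (by positivity)
  rw [Complex.exp_mul_I, ← Complex.ofReal_cos, ← Complex.ofReal_sin, cos_arctan, sin_arctan]
  push_cast
  field_simp

lemma prod_one_add_I_mul_eq {ι : Type*} (S : Finset ι) (x : ι → ℝ) :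
    ∏ i ∈ S, (1 + Complex.I * x i) =
      (∏ i ∈ S, √(1 + x i ^ 2) : ℝ) * Complex.exp ((∑ i ∈ S, arctan (x i) : ℝ) * Complex.I) := by
  simp only [one_add_I_mul_eq, Finset.prod_mul_distrib, Complex.ofReal_prod, Complex.ofReal_sum,
    Finset.sum_mul, Complex.exp_sum]

lemma sum_arctan_lt {ι : Type*} {S : Finset ι} (hS : S.Nonempty) (x : ι → ℝ) :
    ∑ i ∈ S, arctan (x i) < S.card * (π / 2) := by
  simpa using Finset.sum_lt_sum_of_nonempty hS fun i _ => arctan_lt_pi_div_two (x i)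

lemma sum_arctan_le_of_subset {ι : Type*} {S U : Finset ι} (hSU : S ⊆ U) (x : ι → ℝ) :
    ∑ i ∈ U, arctan (x i) ≤ ∑ i ∈ S, arctan (x i) + ((U.card : ℝ) - S.card) * (π / 2) := by
  classical
  have hrest := Finset.sum_le_card_nsmul (U \ S) (fun i => arctan (x i)) (π / 2)
    fun i _ => (arctan_lt_pi_div_two (x i)).le
  rw [Finset.card_sdiff_of_subset hSU, nsmul_eq_mul,
    Nat.cast_sub (Finset.card_le_card hSU)] at hrest
  rw [← Finset.sum_sdiff hSU]
  linarith

lemma lt_sum_arctan_of_card_lt {n : ℕ} {Θ : ℝ} {x : Fin n → ℝ}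
    (hx : ∀ j : Fin n, Θ - π / 2 < ∑ i ∈ Finset.univ.erase j, arctan (x i))
    {S : Finset (Fin n)} (hS : S.card < n) :
    Θ - ((n : ℝ) - S.card) * (π / 2) < ∑ i ∈ S, arctan (x i) := by
  obtain ⟨j, -, hj⟩ := Finset.exists_mem_notMem_of_card_lt_card (s := S) (t := Finset.univ)
    (by simpa using hS)
  have hle := sum_arctan_le_of_subset (Finset.subset_erase.2 ⟨Finset.subset_univ S, hj⟩) x
  rw [Finset.card_erase_of_mem (Finset.mem_univ j), Finset.card_univ, Fintype.card_fin,
    Nat.cast_sub (by omega)] at hle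
  linarith [hx j]

theorem stmt_19 (n : ℕ) (Θhat : ℝ)
    (h1 : ((n : ℝ) - 2) * (π / 2) < Θhat)
    (μ : Fin n → ℝ)
    (hμ : ∀ j : Fin n, Θhat - π / 2 < ∑ i ∈ Finset.univ.erase j, Real.arctan (μ i))
    (p : ℕ) (hp1 : 1 ≤ p) (hp2 : p ≤ n - 1)
    (c : Finset (Fin n) → ℝ)
    (hc : ∀ S ∈ Finset.powersetCard p (Finset.univ : Finset (Fin n)), 0 ≤ c S)
    (hne : ∃ S ∈ Finset.powersetCard p (Finset.univ : Finset (Fin n)), c S ≠ 0) :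
    (∑ S ∈ Finset.powersetCard p (Finset.univ : Finset (Fin n)),
        (c S : ℂ) * ∏ i ∈ S, (1 + Complex.I * (μ i : ℂ))) ≠ 0 ∧
      ∃ R φ : ℝ, 0 < R ∧
        Θhat - ((n : ℝ) - p) * (π / 2) < φ ∧ φ < (p : ℝ) * (π / 2) ∧
        (∑ S ∈ Finset.powersetCard p (Finset.univ : Finset (Fin n)),
            (c S : ℂ) * ∏ i ∈ S, (1 + Complex.I * (μ i : ℂ))) =
          (R : ℂ) * Complex.exp (Complex.I * (φ : ℂ)) := by
  set T := Finset.powersetCard p (Finset.univ : Finset (Fin n))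
  have hmod : ∀ S : Finset (Fin n), 0 < ∏ i ∈ S, √(1 + μ i ^ 2) :=
    fun S => Finset.prod_pos fun i _ => by positivity
  have hangle : ∀ S ∈ T,
      ∑ i ∈ S, arctan (μ i) ∈ Set.Ioo (Θhat - ((n : ℝ) - p) * (π / 2)) (p * (π / 2)) := by
    intro S hS
    obtain ⟨-, hcard⟩ := Finset.mem_powersetCard.1 hS
    subst hcard
    exact ⟨lt_sum_arctan_of_card_lt hμ (by omega),
      sum_arctan_lt (Finset.card_pos.1 (by omega)) μ⟩
  obtain ⟨R, φ, hR, ⟨hφa, hφb⟩, heq⟩ := exists_sum_mul_exp_eq_mul_exp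
    (w := fun S => c S * ∏ i ∈ S, √(1 + μ i ^ 2)) (by linarith)
    (fun S hS => mul_nonneg (hc S hS) (hmod S).le) hangle
    (by
      obtain ⟨S, hS, hcS⟩ := hne
      exact ⟨S, hS, mul_pos ((hc S hS).lt_of_ne' hcS) (hmod S)⟩)
  have hsum : ∑ S ∈ T, (c S : ℂ) * ∏ i ∈ S, (1 + Complex.I * (μ i : ℂ)) =
      R * Complex.exp (Complex.I * φ) := by
    rw [mul_comm Complex.I, ← heq]
    simp only [prod_one_add_I_mul_eq, Complex.ofReal_mul, mul_assoc]
  exact ⟨hsum ▸ mul_ne_zero (Complex.ofReal_ne_zero.2 hR.ne') (Complex.exp_ne_zero _),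
    R, φ, hR, hφa, hφb, hsum⟩
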